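/- arXiv:1109.3929 — 5 statements merged into one kernel-verified Lean document; each statement's English description precedes it below -/
import Mathlib

section
/- For the grid graph G_{n,2} = P_n □ P_2 with n ≥ 1, the total domination number satisfies γ_t(G_{n,2}) = 2⌊(n+2)/3⌋. -/
open SimpleGraph

/-- The grid graph `G_{n,m}`, the Cartesian (box) product of paths `P_n` and `P_m`. -/
def gridGraph (n m : ℕ) : SimpleGraph (Fin n × Fin m) :=
  (pathGraph n) □ (pathGraph m)

/-- `D` is a total dominating set of `G`: every vertex has a neighbor in `D`. -/
def IsTotalDomSet {V : Type*} (G : SimpleGraph V) (D : Set V) : Prop :=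
  ∀ v : V, ∃ u ∈ D, G.Adj v u

/-- The total domination number of `G`. -/
noncomputable def totalDomNum {V : Type*} [Fintype V] (G : SimpleGraph V) : ℕ :=
  sInf {k | ∃ D : Finset V, IsTotalDomSet G ↑D ∧ D.card = k}

/-- The total bondage number: the least number of edges whose removal increases
the total domination number. -/
noncomputable def totalBondage {V : Type*} [Fintype V] (G : SimpleGraph V) : ℕ :=
  sInf {k | ∃ F : Finset (Sym2 V), ↑F ⊆ G.edgeSet ∧ F.card = k ∧
    totalDomNum (G.deleteEdges ↑F) > totalDomNum G}

/-!
Both bounds equal `2 γ(P_n)` with `γ(P_n) = ⌈n/3⌉ = ⌊(n+2)/3⌋`. For the upper bound, take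
both vertices of each column in a dominating set of `P_n`. For the lower bound, the two
vertices of column `i` have no common neighbour, so their neighbours in a total dominating
set are two distinct vertices in columns `i-1, i, i+1`; the windows around the columns
`0, 3, 6, …, 3(⌊(n+2)/3⌋ - 1)` are disjoint.
-/

open Finset

section TotalDomination

variable {V : Type*}

theorem totalDomNum_le [Fintype V] {G : SimpleGraph V} {D : Finset V}
    (hD : IsTotalDomSet G ↑D) : totalDomNum G ≤ #D :=
  Nat.sInf_le ⟨D, hD, rfl⟩

theorem le_totalDomNum [Fintype V] {G : SimpleGraph V} {k : ℕ}
    (hne : ∃ D : Finset V, IsTotalDomSet G ↑D)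
    (h : ∀ D : Finset V, IsTotalDomSet G ↑D → k ≤ #D) : k ≤ totalDomNum G := by
  obtain ⟨D₀, hD₀⟩ := hne
  exact le_csInf ⟨_, D₀, hD₀, rfl⟩ fun _ ⟨D, hD, hk⟩ ↦ hk ▸ h D hD

theorem IsTotalDomSet.two_le_card_filter {G : SimpleGraph V} {D : Finset V}
    (hD : IsTotalDomSet G ↑D) {x y : V} (hxy : ∀ w, G.Adj x w → ¬G.Adj y w)
    (p : V → Prop) [DecidablePred p] (hx : ∀ w, G.Adj x w → p w)
    (hy : ∀ w, G.Adj y w → p w) : 2 ≤ #{w ∈ D | p w} := by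
  obtain ⟨u, huD, hxu⟩ := hD x
  obtain ⟨u', hu'D, hyu'⟩ := hD y
  have hne : u ≠ u' := by rintro rfl; exact hxy u hxu hyu'
  classical
  calc 2 = #{u, u'} := (card_pair hne).symm
    _ ≤ #{w ∈ D | p w} := card_le_card fun w hw ↦ by
      rcases mem_insert.mp hw with rfl | hw
      · exact mem_filter.mpr ⟨huD, hx w hxu⟩
      · rw [mem_singleton.mp hw]; exact mem_filter.mpr ⟨hu'D, hy u' hyu'⟩

theorem isTotalDomSet_boxProd {W : Type*} [Fintype W] {G : SimpleGraph V} {H : SimpleGraph W}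
    {C : Finset V} (hC : ∀ v, v ∈ C ∨ ∃ c ∈ C, G.Adj v c) (hH : ∀ w, ∃ w', H.Adj w w') :
    IsTotalDomSet (G □ H) ↑(C ×ˢ (univ : Finset W)) := by
  rintro ⟨v, w⟩
  rcases hC v with hv | ⟨c, hc, hvc⟩
  · obtain ⟨w', hww'⟩ := hH w
    exact ⟨(v, w'), by simpa using hv, boxProd_adj_right.mpr hww'⟩
  · exact ⟨(c, w), by simpa using hc, boxProd_adj_left.mpr hvc⟩

end TotalDomination

theorem exists_dominating_pathGraph (n : ℕ) :
    ∃ C : Finset (Fin n), #C ≤ (n + 2) / 3 ∧ ∀ i, i ∈ C ∨ ∃ c ∈ C, (pathGraph n).Adj i c := by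
  -- one vertex, `min (3b + 1) (n - 1)`, from each block `{3b, 3b+1, 3b+2}`
  let C : Finset (Fin n) := {i | i.val = min (3 * (i.val / 3) + 1) (n - 1)}
  refine ⟨C, ?_, fun i ↦ ?_⟩
  · calc #C ≤ #(range ((n + 2) / 3)) := by
          refine card_le_card_of_injOn (fun i ↦ i.val / 3) (fun i _ ↦ ?_) (fun i hi j hj hij ↦ ?_)
          · simp only [coe_range, Set.mem_Iio]; omega
          · simp only [C, coe_filter, mem_univ, true_and, Set.mem_ofPred_eq] at hi hj hij
            exact Fin.ext (by omega)
      _ = (n + 2) / 3 := card_range _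
  · let c : Fin n := ⟨min (3 * (i.val / 3) + 1) (n - 1), by omega⟩
    have hc : c ∈ C := by simp only [C, c, mem_filter, mem_univ, true_and]; omega
    by_cases hic : i = c
    · exact .inl (hic ▸ hc)
    · refine .inr ⟨c, hc, pathGraph_adj.mpr ?_⟩
      have := Fin.val_ne_of_ne hic
      simp only [c] at this ⊢
      omega

theorem gridGraph_two_adj {n : ℕ} {a b : Fin n × Fin 2} :
    (gridGraph n 2).Adj a b ↔
      ((a.1.val + 1 = b.1.val ∨ b.1.val + 1 = a.1.val) ∧ a.2.val = b.2.val) ∨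
      ((a.2.val + 1 = b.2.val ∨ b.2.val + 1 = a.2.val) ∧ a.1.val = b.1.val) := by
  simp [gridGraph, boxProd_adj, pathGraph_adj, Fin.ext_iff]

theorem exists_isTotalDomSet_gridGraph_two (n : ℕ) :
    ∃ D : Finset (Fin n × Fin 2), IsTotalDomSet (gridGraph n 2) ↑D ∧ #D ≤ 2 * ((n + 2) / 3) := by
  obtain ⟨C, hCcard, hC⟩ := exists_dominating_pathGraph n
  refine ⟨C ×ˢ univ, isTotalDomSet_boxProd hC fun w ↦ ⟨w.rev, ?_⟩, ?_⟩
  · rw [pathGraph_adj, Fin.val_rev]; omega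
  · rw [card_product, card_univ, Fintype.card_fin]; omega

theorem IsTotalDomSet.le_card_gridGraph_two {n : ℕ} {D : Finset (Fin n × Fin 2)}
    (hD : IsTotalDomSet (gridGraph n 2) ↑D) : 2 * ((n + 2) / 3) ≤ #D := by
  -- window `k` consists of the columns `3k-1, 3k, 3k+1`
  let window : Fin n × Fin 2 → ℕ := fun v ↦ (v.1.val + 1) / 3
  have hwindow (k : ℕ) (hk : k ∈ range ((n + 2) / 3)) : 2 ≤ #{v ∈ D | window v = k} := by
    rw [mem_range] at hk
    have hc : 3 * k < n := by omega
    refine hD.two_le_card_filter (x := (⟨3 * k, hc⟩, 0)) (y := (⟨3 * k, hc⟩, 1))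
      ?_ _ (fun w hw ↦ ?_) (fun w hw ↦ ?_) <;>
      simp only [gridGraph_two_adj, window] at * <;> omega
  calc 2 * ((n + 2) / 3) = ∑ _k ∈ range ((n + 2) / 3), 2 := by simp [mul_comm]
    _ ≤ ∑ k ∈ range ((n + 2) / 3), #{v ∈ D | window v = k} := sum_le_sum hwindow
    _ = #{v ∈ D | window v ∈ range ((n + 2) / 3)} := sum_card_fiberwise_eq_card_filter _ _ _
    _ ≤ #D := card_filter_le _ _

theorem total_domination_grid_two_general (n : ℕ) :
    totalDomNum (gridGraph n 2) = 2 * ((n + 2) / 3) := by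
  obtain ⟨D, hD, hcard⟩ := exists_isTotalDomSet_gridGraph_two n
  exact le_antisymm ((totalDomNum_le hD).trans hcard)
    (le_totalDomNum ⟨D, hD⟩ fun _ ↦ IsTotalDomSet.le_card_gridGraph_two)

theorem total_domination_grid_two (n : ℕ) (hn : 1 ≤ n) :
    totalDomNum (gridGraph n 2) = 2 * ((n + 2) / 3) :=
  total_domination_grid_two_general n
end

section
/- For the grid graph G_{n,3} = P_n □ P_3 with n ≥ 2, the total domination number satisfies γ_t(G_{n,3}) = n. -/
open SimpleGraph

/-!
Every vertex of `G_{n,3}` has at most two neighbours in the outer rows `0` and `2`: a middle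
vertex sees the two outer vertices of its column, an outer vertex only its left and right
neighbours in its own row. Since each of the `2n` outer vertices needs a neighbour in a total
dominating set `D`, double counting gives `2n ≤ 2|D|`. Conversely, for `n ≥ 2` the middle row
is a total dominating set of size `n`.
-/

open Finset

theorem totalDomNum_eq_card {V : Type*} [Fintype V] {G : SimpleGraph V} {D₀ : Finset V}
    (h₀ : IsTotalDomSet G D₀) (hmin : ∀ D : Finset V, IsTotalDomSet G D → #D₀ ≤ #D) :
    totalDomNum G = #D₀ := by
  refine le_antisymm (Nat.sInf_le ⟨D₀, h₀, rfl⟩) (le_csInf ⟨_, D₀, h₀, rfl⟩ ?_)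
  rintro _ ⟨D, hD, rfl⟩
  exact hmin D hD

theorem IsTotalDomSet.card_le_card_mul {V : Type*} [DecidableEq V] {G : SimpleGraph V}
    [DecidableRel G.Adj] {D : Finset V} (hD : IsTotalDomSet G D) {S : Finset V} {k : ℕ}
    (hS : ∀ u, #{v ∈ S | G.Adj v u} ≤ k) : #S ≤ #D * k :=
  calc #S ≤ #(D.biUnion fun u => {v ∈ S | G.Adj v u}) := card_le_card fun v hv => by
        obtain ⟨u, hu, hvu⟩ := hD v
        exact mem_biUnion.2 ⟨u, hu, mem_filter.2 ⟨hv, hvu⟩⟩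
    _ ≤ #D * k := card_biUnion_le_card_mul _ _ _ fun u _ => hS u

theorem isTotalDomSet_boxProd_univ_prod {α β : Type*} {G : SimpleGraph α} {H : SimpleGraph β}
    (hG : ∀ a, ∃ a', G.Adj a a') {T : Set β} (hT : ∀ b, b ∈ T ∨ ∃ t ∈ T, H.Adj b t) :
    IsTotalDomSet (G □ H) (Set.univ ×ˢ T) := by
  rintro ⟨a, b⟩
  rcases hT b with hb | ⟨t, ht, hbt⟩
  · obtain ⟨a', haa'⟩ := hG a
    exact ⟨(a', b), ⟨trivial, hb⟩, boxProd_adj_left.2 haa'⟩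
  · exact ⟨(a, t), ⟨trivial, ht⟩, boxProd_adj_right.2 hbt⟩

theorem exists_pathGraph_adj {n : ℕ} (hn : 2 ≤ n) (a : Fin n) : ∃ b, (pathGraph n).Adj a b := by
  simp only [pathGraph_adj]
  by_cases ha : a.val + 1 < n
  · exact ⟨⟨a + 1, ha⟩, Or.inl rfl⟩
  · exact ⟨⟨a - 1, by omega⟩, Or.inr (by dsimp only; omega)⟩

theorem card_pathGraph_adj_le_two {n : ℕ} [DecidableRel (pathGraph n).Adj] (a : Fin n) :
    #{c | (pathGraph n).Adj c a} ≤ 2 := by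
  refine (card_le_card_of_injOn Fin.val (t := {a.val - 1, a.val + 1}) ?_
    Fin.val_injective.injOn).trans card_le_two
  intro c hc
  simp only [coe_filter, Set.mem_ofPred_eq, pathGraph_adj] at hc
  simp only [coe_insert, coe_singleton, Set.mem_insert_iff, Set.mem_singleton_iff]
  omega

theorem pathGraph_three_not_adj {c d : Fin 3} (hc : c ≠ 1) (hd : d ≠ 1) :
    ¬(pathGraph 3).Adj c d := by
  rw [pathGraph_adj]
  omega

def outerRows (n : ℕ) : Finset (Fin n × Fin 3) := univ ×ˢ {0, 2}

theorem card_outerRows (n : ℕ) : #(outerRows n) = n * 2 := by simp [outerRows]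

theorem card_outerRows_adj_le_two {n : ℕ} [DecidableRel (gridGraph n 3).Adj]
    (u : Fin n × Fin 3) : #{v ∈ outerRows n | (gridGraph n 3).Adj v u} ≤ 2 := by
  classical
  obtain ⟨a, b⟩ := u
  by_cases hb : b = 1
  · subst hb
    calc _ ≤ #(({a} : Finset (Fin n)) ×ˢ ({0, 2} : Finset (Fin 3))) := card_le_card ?_
      _ = 2 := by simp
    intro v hv
    simp only [outerRows, mem_filter, mem_product, gridGraph, boxProd_adj] at hv
    obtain ⟨⟨-, hv2⟩, ⟨-, hv1⟩ | ⟨-, rfl⟩⟩ := hv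
    · simp [hv1] at hv2
    · exact mem_product.2 ⟨mem_singleton_self _, hv2⟩
  · calc _ ≤ #(({c | (pathGraph n).Adj c a} : Finset (Fin n)) ×ˢ {b}) := card_le_card ?_
      _ ≤ 2 := by simpa using card_pathGraph_adj_le_two a
    intro v hv
    simp only [outerRows, mem_filter, mem_product, gridGraph, boxProd_adj] at hv
    obtain ⟨⟨-, hv2⟩, ⟨hva, rfl⟩ | ⟨hvb, -⟩⟩ := hv
    · simpa using hva
    · exact absurd hvb (pathGraph_three_not_adj (by rintro h; simp [h] at hv2) hb)

theorem IsTotalDomSet.le_card_of_gridGraph_three {n : ℕ} {D : Finset (Fin n × Fin 3)}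
    (hD : IsTotalDomSet (gridGraph n 3) D) : n ≤ #D := by
  classical
  have := hD.card_le_card_mul (card_outerRows_adj_le_two (n := n))
  rw [card_outerRows] at this
  omega

theorem total_domination_grid_three (n : ℕ) (hn : 2 ≤ n) :
    totalDomNum (gridGraph n 3) = n := by
  have hmid : IsTotalDomSet (gridGraph n 3) ↑(univ ×ˢ {1} : Finset (Fin n × Fin 3)) := by
    rw [coe_product, coe_univ, coe_singleton]
    refine isTotalDomSet_boxProd_univ_prod (exists_pathGraph_adj hn) fun b => ?_
    fin_cases b <;> simp [pathGraph_adj]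
  have hcard : #(univ ×ˢ {1} : Finset (Fin n × Fin 3)) = n := by simp
  rw [totalDomNum_eq_card hmid fun D hD => hcard.le.trans hD.le_card_of_gridGraph_three, hcard]
end

section
/- Let D be a total dominating set of the grid graph G_{n,m} (m ≥ 2), and let 1 ≤ i ≤ n−1. Then γ_t(G_{i,m}) ≤ |D ∩ V(G_{i+1,m})|, where G_{i+1,m} is the subgraph of G_{n,m} induced by the vertices x_{kj} with 1 ≤ k ≤ i+1, 1 ≤ j ≤ m. -/
open SimpleGraph

/-! A vertex `(i, c)` of `D` dominates, among the first `i` rows, only the vertex `(i - 1, c)`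
(rows are indexed from `0`). Moving it to `(i - 1, c')` for a column `c'` adjacent to `c`, which
exists as `m ≥ 2`, keeps `(i - 1, c)` dominated, while the other vertices of `D` in the first
`i + 1` rows stay where they are. The image is a total dominating set of `G_{i,m}` of size at most
`|D ∩ V(G_{i+1,m})|`. -/

theorem totalDomNum_le_card {V : Type*} [Fintype V] {G : SimpleGraph V} {D : Finset V}
    (hD : IsTotalDomSet G ↑D) : totalDomNum G ≤ D.card :=
  Nat.sInf_le ⟨D, hD, rfl⟩

theorem totalDomNum_le_card_of_forall_exists_adj {V W : Type*} [Fintype W] [DecidableEq W]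
    {H : SimpleGraph W} (f : V → W) (D : Finset V) (h : ∀ w, ∃ u ∈ D, H.Adj w (f u)) :
    totalDomNum H ≤ D.card := by
  refine le_trans (totalDomNum_le_card (D := D.image f) fun w => ?_) Finset.card_image_le
  obtain ⟨u, hu, hadj⟩ := h w
  exact ⟨f u, Finset.mem_coe.2 (Finset.mem_image_of_mem f hu), hadj⟩

def pathGraphNeighbor {m : ℕ} (hm : 2 ≤ m) (c : Fin m) : Fin m :=
  if h : c.val + 1 < m then ⟨c.val + 1, h⟩ else ⟨c.val - 1, by omega⟩

theorem pathGraph_adj_pathGraphNeighbor {m : ℕ} (hm : 2 ≤ m) (c : Fin m) :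
    (pathGraph m).Adj c (pathGraphNeighbor hm c) := by
  rw [pathGraph_adj, pathGraphNeighbor]
  split_ifs with h
  · exact Or.inl rfl
  · exact Or.inr (by dsimp only; omega)

def gridFoldRows {n m i : ℕ} (hi : 1 ≤ i) (hm : 2 ≤ m) (u : Fin n × Fin m) : Fin i × Fin m :=
  if h : u.1.val < i then (⟨u.1.val, h⟩, u.2) else (⟨i - 1, by omega⟩, pathGraphNeighbor hm u.2)

theorem gridGraph_adj_gridFoldRows {n m i : ℕ} (hi : 1 ≤ i) (hm : 2 ≤ m) (hin : i ≤ n)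
    {v : Fin i × Fin m} {u : Fin n × Fin m} (hu : u.1.val < i + 1)
    (hadj : (gridGraph n m).Adj (Fin.castLE hin v.1, v.2) u) :
    (gridGraph i m).Adj v (gridFoldRows hi hm u) := by
  simp only [gridGraph, boxProd_adj] at hadj ⊢
  simp only [pathGraph_adj, Fin.ext_iff, Fin.val_castLE] at hadj
  unfold gridFoldRows
  split_ifs with h
  · simp only [pathGraph_adj, Fin.ext_iff]
    omega
  · have hcol : v.2 = u.2 := by
      rcases hadj with ⟨_, hsame⟩ | ⟨_, _⟩
      · exact Fin.ext hsame
      · omega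
    exact Or.inr ⟨hcol ▸ pathGraph_adj_pathGraphNeighbor hm u.2, Fin.ext (by dsimp only; omega)⟩

theorem totalDomNum_le_card_inter (n m i : ℕ) (hm : 2 ≤ m) (hi1 : 1 ≤ i) (hi2 : i < n)
    (D : Finset (Fin n × Fin m)) (hD : IsTotalDomSet (gridGraph n m) ↑D) :
    totalDomNum (gridGraph i m) ≤ (D.filter (fun v => v.1.val < i + 1)).card := by
  refine totalDomNum_le_card_of_forall_exists_adj (gridFoldRows hi1 hm) _ fun v => ?_
  obtain ⟨u, hu, hadj⟩ := hD (Fin.castLE hi2.le v.1, v.2)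
  have hu_row : u.1.val < i + 1 := by
    simp only [gridGraph, boxProd_adj, pathGraph_adj, Fin.ext_iff, Fin.val_castLE] at hadj
    have := v.1.isLt
    omega
  exact ⟨u, Finset.mem_filter.2 ⟨hu, hu_row⟩, gridGraph_adj_gridFoldRows hi1 hm hi2.le hu_row hadj⟩
end

section
/- Let D be a total dominating set of G_{n,3} (n ≥ 2). If at least one of the corner vertices x_{n1} and x_{n3} belongs to D, then |D| ≥ n + 1. -/
open SimpleGraph

open Finset

/-
Count, with multiplicity, how the `2n` vertices of the two side rows `j = 1` and `j = 3` are
dominated. Every vertex has at most two neighbours in the side rows, and a corner of the last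
column has only one. Hence `2n ≤ 1 + 2 (|D| - 1)` as soon as `D` contains such a corner, which
forces `|D| ≥ n + 1`.
-/

theorem IsTotalDomSet.card_le_sum_card_filter_adj {V : Type*} [DecidableEq V]
    {G : SimpleGraph V} [DecidableRel G.Adj] {D : Finset V} (hD : IsTotalDomSet G ↑D)
    (S : Finset V) : #S ≤ ∑ u ∈ D, #{v ∈ S | G.Adj v u} := by
  refine le_trans (card_le_card fun v hv => ?_) card_biUnion_le
  obtain ⟨u, hu, hvu⟩ := hD v
  exact mem_biUnion.2 ⟨u, hu, mem_filter.2 ⟨hv, hvu⟩⟩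

theorem Finset.sum_add_one_le_mul_card {α : Type*} {s : Finset α} {f : α → ℕ} {k : ℕ}
    (hf : ∀ a ∈ s, f a ≤ k) {c : α} (hc : c ∈ s) (hfc : f c + 1 ≤ k) :
    ∑ a ∈ s, f a + 1 ≤ k * #s := by
  have := sum_lt_sum hf ⟨c, hc, hfc⟩
  rwa [sum_const, smul_eq_mul, mul_comm] at this

theorem gridGraph_adj_iff {n m : ℕ} (v u : Fin n × Fin m) :
    (gridGraph n m).Adj v u ↔
      (((v.1 : ℕ) + 1 = u.1 ∨ (u.1 : ℕ) + 1 = v.1) ∧ (v.2 : ℕ) = u.2) ∨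
      (((v.2 : ℕ) + 1 = u.2 ∨ (u.2 : ℕ) + 1 = v.2) ∧ (v.1 : ℕ) = u.1) := by
  simp [gridGraph, boxProd_adj, pathGraph_adj, Fin.ext_iff, and_comm]

instance (n m : ℕ) : DecidableRel (gridGraph n m).Adj :=
  fun v u => decidable_of_iff _ (gridGraph_adj_iff v u).symm

/-- Rows `j = 1` and `j = 3` of `G_{n,3}`; `Fin 3` counts rows from `0`. -/
def sideRows (n : ℕ) : Finset (Fin n × Fin 3) := univ ×ˢ {0, 2}

theorem mem_sideRows {n : ℕ} {v : Fin n × Fin 3} : v ∈ sideRows n ↔ (v.2 : ℕ) ≠ 1 := by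
  obtain ⟨i, j⟩ := v
  fin_cases j <;> simp [sideRows]

theorem card_sideRows (n : ℕ) : #(sideRows n) = 2 * n := by
  simp [sideRows, mul_comm]

/- Two distinct neighbours of `u` in the side rows lie on opposite sides of `u`, in the row or in
the column direction, so "does `v` precede `u`?" tells them apart. -/
theorem card_sideRows_filter_adj_le_two {n : ℕ} (u : Fin n × Fin 3) :
    #{v ∈ sideRows n | (gridGraph n 3).Adj v u} ≤ 2 := by
  refine le_trans (card_le_card_of_injOn (fun v => decide (v.1 < u.1 ∨ v.2 < u.2))
    (fun _ _ => mem_univ _) ?_) (card_univ (α := Bool)).le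
  intro v hv w hw hvw
  simp only [coe_filter, Set.mem_ofPred_eq, mem_sideRows, gridGraph_adj_iff] at hv hw
  simp only [decide_eq_decide, Fin.lt_def] at hvw
  have := u.2.isLt
  ext <;> omega

theorem card_sideRows_filter_adj_le_one_of_corner {n : ℕ} (u : Fin n × Fin 3)
    (hlast : (u.1 : ℕ) + 1 = n) (hside : (u.2 : ℕ) ≠ 1) :
    #{v ∈ sideRows n | (gridGraph n 3).Adj v u} ≤ 1 := by
  refine card_le_one.2 fun v hv w hw => ?_
  simp only [mem_filter, mem_sideRows, gridGraph_adj_iff] at hv hw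
  have := v.1.isLt
  have := w.1.isLt
  ext <;> omega

theorem grid_three_tds_with_corner (n : ℕ) (hn : 2 ≤ n) (D : Finset (Fin n × Fin 3))
    (hD : IsTotalDomSet (gridGraph n 3) ↑D)
    (hcorner : ((⟨n - 1, by omega⟩ : Fin n), (0 : Fin 3)) ∈ D ∨
               ((⟨n - 1, by omega⟩ : Fin n), (2 : Fin 3)) ∈ D) :
    n + 1 ≤ D.card := by
  obtain ⟨c, hcD, hlast, hside⟩ : ∃ c ∈ D, (c.1 : ℕ) + 1 = n ∧ (c.2 : ℕ) ≠ 1 := by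
    rcases hcorner with h | h
    · exact ⟨_, h, by simp only; omega, by simp⟩
    · exact ⟨_, h, by simp only; omega, by simp⟩
  have hdom := hD.card_le_sum_card_filter_adj (sideRows n)
  have hcorner_le := card_sideRows_filter_adj_le_one_of_corner c hlast hside
  have hcount :=
    sum_add_one_le_mul_card (fun u _ => card_sideRows_filter_adj_le_two u) hcD (by omega)
  rw [card_sideRows] at hdom
  omega
end

section
/- If n ≡ 4 (mod 5), then the set D = {x_{i2}, x_{i3}, x_{(i+2)1}, x_{(i+3)1}, x_{(i+2)4}, x_{(i+3)4} : i ≡ 1 (mod 5), 1 ≤ i ≤ n−3} is a minimum total dominating set of G_{n,4}. -/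
open SimpleGraph

/-- The set `{x_{i2}, x_{i3}, x_{(i+2)1}, x_{(i+3)1}, x_{(i+2)4}, x_{(i+3)4} :
i ≡ 1 (mod 5), 1 ≤ i ≤ n-3}`, written in 0-based coordinates. -/
def gridFourPattern (n : ℕ) : Set (Fin n × Fin 4) :=
  {v | ((v.2 = 1 ∨ v.2 = 2) ∧ v.1.val % 5 = 0) ∨
       ((v.2 = 0 ∨ v.2 = 3) ∧ (v.1.val % 5 = 2 ∨ v.1.val % 5 = 3))}

/-! The pattern is checked to totally dominate the grid locally, row by row modulo 5.
For the lower bound, the 12 cells of `gridFourPacking`, repeated with period 10 along the grid,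
form an open packing: no vertex has two of them as neighbours. Every cell of an open packing needs
its own neighbour in a total dominating set, so no total dominating set is smaller than the packing.
When n ≡ 4 (mod 5) the packing has exactly as many cells as the pattern: both have 6 cells in
every block of 5 rows and in the final block of 4 rows. -/

open Finset Fin.NatCast

def IsOpenPacking {V : Type*} (G : SimpleGraph V) (P : Set V) : Prop :=
  ∀ ⦃u p q⦄, G.Adj u p → G.Adj u q → p ∈ P → q ∈ P → p = q

section TotalDomination

variable {V : Type*} [Fintype V] {G : SimpleGraph V}

theorem totalDomNum_le_ncard {D : Set V} (hD : IsTotalDomSet G D) : totalDomNum G ≤ D.ncard := by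
  classical
  rw [Set.ncard_eq_toFinset_card']
  exact Nat.sInf_le ⟨D.toFinset, by rwa [Set.coe_toFinset], rfl⟩

theorem IsOpenPacking.ncard_le_of_isTotalDomSet {P D : Set V} (hP : IsOpenPacking G P)
    (hD : IsTotalDomSet G D) : P.ncard ≤ D.ncard := by
  choose f hfD hfadj using hD
  refine Set.ncard_le_ncard_of_injOn f (fun p _ => hfD p) fun p hp q hq hpq => ?_
  exact hP (hfadj p).symm (hpq ▸ (hfadj q).symm) hp hq

theorem IsOpenPacking.ncard_le_totalDomNum {P D : Set V} (hP : IsOpenPacking G P)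
    (hD : IsTotalDomSet G D) : P.ncard ≤ totalDomNum G := by
  classical
  obtain ⟨D', hD', hcard⟩ :
      totalDomNum G ∈ {k | ∃ D : Finset V, IsTotalDomSet G ↑D ∧ D.card = k} :=
    Nat.sInf_mem ⟨_, D.toFinset, by rwa [Set.coe_toFinset], rfl⟩
  rw [← hcard, ← Set.ncard_coe_finset]
  exact hP.ncard_le_of_isTotalDomSet hD'

end TotalDomination

theorem Function.Periodic.sum_range_mul_add {M : Type*} [AddCommMonoid M] {f : ℕ → M} {p : ℕ}
    (hf : Function.Periodic f p) (q r : ℕ) :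
    ∑ i ∈ range (p * q + r), f i = q • ∑ i ∈ range p, f i + ∑ i ∈ range r, f i := by
  induction q with
  | zero => simp
  | succ q ih =>
    have hshift : ∀ i, f (p + i) = f i := fun i => by rw [add_comm, hf i]
    rw [mul_add_one, add_comm (p * q), add_assoc, sum_range_add, sum_congr rfl fun i _ => hshift i,
      ih, succ_nsmul', add_assoc]

theorem Function.Periodic.sum_range_eq_sum_range {M : Type*} [AddCommMonoid M] {f g : ℕ → M}
    {p : ℕ} (hf : Function.Periodic f p) (hg : Function.Periodic g p)
    (hp : ∑ i ∈ range p, f i = ∑ i ∈ range p, g i) {n : ℕ}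
    (hn : ∑ i ∈ range (n % p), f i = ∑ i ∈ range (n % p), g i) :
    ∑ i ∈ range n, f i = ∑ i ∈ range n, g i := by
  rw [← Nat.div_add_mod n p, hf.sum_range_mul_add, hg.sum_range_mul_add, hp, hn]

def periodicCells (n : ℕ) {p m : ℕ} [NeZero p] (T : Set (Fin p × Fin m)) :
    Set (Fin n × Fin m) :=
  {v | ((v.1.val : Fin p), v.2) ∈ T}

theorem ncard_periodicCells (n : ℕ) {p m : ℕ} [NeZero p] (T : Set (Fin p × Fin m))
    [DecidablePred (· ∈ T)] :
    (periodicCells n T).ncard = ∑ i ∈ range n, #{j | ((i : Fin p), j) ∈ T} := by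
  rw [periodicCells, Set.ncard_eq_toFinset_card', Set.toFinset_ofPred, card_filter,
    Fintype.sum_prod_type]
  simp only [← card_filter]
  exact Fin.sum_univ_eq_sum_range (fun i => #{j | ((i : Fin p), j) ∈ T}) n

theorem ncard_periodicCells_congr {n p m : ℕ} [NeZero p] {T T' : Set (Fin p × Fin m)}
    (htile : (periodicCells p T).ncard = (periodicCells p T').ncard)
    (hrem : (periodicCells (n % p) T).ncard = (periodicCells (n % p) T').ncard) :
    (periodicCells n T).ncard = (periodicCells n T').ncard := by
  classical
  have hrows (S : Set (Fin p × Fin m)) :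
      Function.Periodic (fun i : ℕ => #{j | ((i : Fin p), j) ∈ S}) p := fun i => by simp
  simp only [ncard_periodicCells] at *
  exact (hrows T).sum_range_eq_sum_range (hrows T') htile hrem

theorem gridGraph_adj {n m : ℕ} {v w : Fin n × Fin m} :
    (gridGraph n m).Adj v w ↔ ((v.1 : ℕ) + 1 = w.1 ∨ (w.1 : ℕ) + 1 = v.1) ∧ v.2 = w.2 ∨
      ((v.2 : ℕ) + 1 = w.2 ∨ (w.2 : ℕ) + 1 = v.2) ∧ v.1 = w.1 := by
  simp only [gridGraph, boxProd_adj, pathGraph_adj]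

instance (n : ℕ) : DecidablePred (· ∈ gridFourPattern n) :=
  fun _ => inferInstanceAs (Decidable (_ ∨ _))

theorem gridFourPattern_eq_periodicCells (n : ℕ) :
    gridFourPattern n = periodicCells n (gridFourPattern 10) := by
  ext ⟨⟨i, hi⟩, j⟩
  simp only [gridFourPattern, periodicCells, Set.mem_ofPred_eq, Fin.val_natCast]
  omega

theorem isTotalDomSet_gridFourPattern {n : ℕ} (h : n % 5 = 4) :
    IsTotalDomSet (gridGraph n 4) (gridFourPattern n) := by
  rintro ⟨⟨i, hi⟩, ⟨j, hj⟩⟩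
  simp only [gridFourPattern, Set.mem_ofPred_eq, Prod.exists, gridGraph_adj, Fin.exists_iff,
    Fin.ext_iff]
  obtain hr | hr | hr | hr | hr : i % 5 = 0 ∨ i % 5 = 1 ∨ i % 5 = 2 ∨ i % 5 = 3 ∨ i % 5 = 4 := by
    omega
  all_goals obtain hc | hc | hc | hc : j = 0 ∨ j = 1 ∨ j = 2 ∨ j = 3 := by omega
  all_goals first
  | (refine ⟨i + 1, ?_, j, hj, ?_⟩ <;> omega)
  | (refine ⟨i - 1, ?_, j, hj, ?_⟩ <;> omega)
  | (refine ⟨i, hi, j + 1, ?_, ?_⟩ <;> omega)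
  | (refine ⟨i, hi, j - 1, ?_, ?_⟩ <;> omega)

def gridFourPacking (n : ℕ) : Set (Fin n × Fin 4) :=
  periodicCells n ({(0, 2), (0, 3), (1, 0), (2, 0), (3, 2), (3, 3),
    (5, 0), (5, 1), (6, 3), (7, 3), (8, 0), (8, 1)} : Set (Fin 10 × Fin 4))

theorem isOpenPacking_gridFourPacking (n : ℕ) :
    IsOpenPacking (gridGraph n 4) (gridFourPacking n) := by
  rintro ⟨⟨a, ha⟩, ⟨b, hb⟩⟩ ⟨⟨p, hp⟩, ⟨c, hc⟩⟩ ⟨⟨q, hq⟩, ⟨d, hd⟩⟩ hup huq hpP hqP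
  simp only [gridGraph_adj, gridFourPacking, periodicCells, Set.mem_ofPred_eq, Set.mem_insert_iff, Set.mem_singleton_iff, Prod.ext_iff, Fin.ext_iff,
    Fin.val_natCast] at hup huq hpP hqP ⊢
  omega

theorem ncard_gridFourPattern_eq_ncard_gridFourPacking {n : ℕ} (h : n % 5 = 4) :
    (gridFourPattern n).ncard = (gridFourPacking n).ncard := by
  rw [gridFourPattern_eq_periodicCells, gridFourPacking]
  apply ncard_periodicCells_congr
  · rw [ncard_periodicCells, ncard_periodicCells]
    decide
  · obtain h10 | h10 : n % 10 = 4 ∨ n % 10 = 9 := by omega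
    all_goals
      rw [h10, ncard_periodicCells, ncard_periodicCells]
      decide

theorem grid_four_pattern_min_tds (n : ℕ) (h : n % 5 = 4) :
    IsTotalDomSet (gridGraph n 4) (gridFourPattern n) ∧
    (gridFourPattern n).ncard = totalDomNum (gridGraph n 4) := by
  have hD := isTotalDomSet_gridFourPattern h
  refine ⟨hD, le_antisymm ?_ (totalDomNum_le_ncard hD)⟩
  rw [ncard_gridFourPattern_eq_ncard_gridFourPacking h]
  exact (isOpenPacking_gridFourPacking n).ncard_le_totalDomNum hD
end
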